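/- Let v, θ, R, lat₀, lon₀, T be real numbers with R > 0, T > 0, and cos θ ≠ 0, and suppose cos(lat₀ + (v cos θ / R) t) > 0 for all t ∈ [0, T]. Define lat(t) = lat₀ + (v cos θ / R) t and lon(t) = lon₀ + tan θ · log( ((1 + sin(lat(t))) / cos(lat(t))) · (cos(lat₀) / (1 + sin(lat₀))) ). Then lat(0) = lat₀, lon(0) = lon₀, and for every t ∈ [0, T] the derivatives satisfy lat′(t) = (v cos θ)/R and lon′(t) = (v sin θ) / (R cos(lat(t))). That is, the stated closed-form coordinate update solves the equations of motion of a vessel moving with constant speed over ground v and constant course over ground θ on a sphere of radius R. -/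

import Mathlib

/-!
The latitude is affine in time, and `x ↦ log ((1 + sin x) / cos x)` (the inverse Gudermannian,
`log (sec x + tan x)`) is an antiderivative of `sec x`. By the chain rule the longitude then has
derivative `tan θ · sec (lat t) · v cos θ / R = v sin θ / (R cos (lat t))`.
-/

open Real

lemma Real.one_add_sin_ne_zero {x : ℝ} (hx : cos x ≠ 0) : 1 + sin x ≠ 0 :=
  fun h => hx (cos_eq_zero_iff_sin_eq.2 (Or.inr (by linarith)))

lemma Real.hasDerivAt_one_add_sin_div_cos {x : ℝ} (hx : cos x ≠ 0) :
    HasDerivAt (fun y => (1 + sin y) / cos y) ((1 + sin x) / cos x ^ 2) x := by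
  refine (((hasDerivAt_sin x).const_add 1).div (hasDerivAt_cos x) hx).congr_deriv ?_
  congr 1
  linear_combination sin_sq_add_cos_sq x

/-- The constant `c` absorbs the initial value of the antiderivative. -/
lemma Real.hasDerivAt_log_one_add_sin_div_cos_mul {x c : ℝ} (hx : cos x ≠ 0) (hc : c ≠ 0) :
    HasDerivAt (fun y => log ((1 + sin y) / cos y * c)) (cos x)⁻¹ x := by
  have hsin := one_add_sin_ne_zero hx
  refine (((hasDerivAt_one_add_sin_div_cos hx).mul_const c).log
    (mul_ne_zero (div_ne_zero hsin hx) hc)).congr_deriv ?_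
  field_simp

theorem sog_cog_coordinate_update_general
    (v θ R lat₀ lon₀ T : ℝ) (hT : 0 < T) (hθ : Real.cos θ ≠ 0)
    (lat lon : ℝ → ℝ)
    (hlat : ∀ t, lat t = lat₀ + v * Real.cos θ / R * t)
    (hlon : ∀ t, lon t = lon₀ + Real.tan θ *
      Real.log (((1 + Real.sin (lat t)) / Real.cos (lat t)) *
        (Real.cos lat₀ / (1 + Real.sin lat₀))))
    (hcos : ∀ t ∈ Set.Icc (0 : ℝ) T,
      0 < Real.cos (lat₀ + v * Real.cos θ / R * t)) :
    lat 0 = lat₀ ∧ lon 0 = lon₀ ∧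
      ∀ t ∈ Set.Icc (0 : ℝ) T,
        HasDerivAt lat (v * Real.cos θ / R) t ∧
        HasDerivAt lon (v * Real.sin θ / (R * Real.cos (lat t))) t := by
  have hlat0 : lat 0 = lat₀ := by simp [hlat]
  have hcos0 : cos lat₀ ≠ 0 := by simpa using (hcos 0 ⟨le_rfl, hT.le⟩).ne'
  have hc : cos lat₀ / (1 + sin lat₀) ≠ 0 := div_ne_zero hcos0 (one_add_sin_ne_zero hcos0)
  refine ⟨hlat0, ?_, fun t ht => ?_⟩
  · rw [hlon, hlat0, ← inv_div, inv_mul_cancel₀ hc, log_one, mul_zero, add_zero]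
  have hlat' : HasDerivAt lat (v * cos θ / R) t := by
    rw [funext hlat]
    simpa using ((hasDerivAt_id t).const_mul (v * cos θ / R)).const_add lat₀
  have hcost : cos (lat t) ≠ 0 := by rw [hlat]; exact (hcos t ht).ne'
  refine ⟨hlat', ?_⟩
  rw [funext hlon]
  refine ((((hasDerivAt_log_one_add_sin_div_cos_mul hcost hc).comp t hlat').const_mul
    (tan θ)).const_add lon₀).congr_deriv ?_
  rw [tan_eq_sin_div_cos]
  field_simp

/-- **SOG/COG coordinate update solves the equations of motion** (Proposition 3.3):
for a vessel moving with constant speed over ground `v` and course over ground `θ`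
on a sphere of radius `R > 0`, starting at `(lat₀, lon₀)`, as long as
`cos (lat t) > 0` on `[0, T]`, the closed-form functions
`lat t = lat₀ + (v cos θ / R) t` and
`lon t = lon₀ + tan θ · log( ((1 + sin (lat t))/cos (lat t)) · (cos lat₀/(1 + sin lat₀)) )`
satisfy `lat 0 = lat₀`, `lon 0 = lon₀`, `lat′(t) = v cos θ / R` and
`lon′(t) = v sin θ / (R cos (lat t))` for every `t ∈ [0, T]`. -/
theorem sog_cog_coordinate_update
    (v θ R lat₀ lon₀ T : ℝ) (hR : 0 < R) (hT : 0 < T) (hθ : Real.cos θ ≠ 0)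
    (lat lon : ℝ → ℝ)
    (hlat : ∀ t, lat t = lat₀ + v * Real.cos θ / R * t)
    (hlon : ∀ t, lon t = lon₀ + Real.tan θ *
      Real.log (((1 + Real.sin (lat t)) / Real.cos (lat t)) *
        (Real.cos lat₀ / (1 + Real.sin lat₀))))
    (hcos : ∀ t ∈ Set.Icc (0 : ℝ) T,
      0 < Real.cos (lat₀ + v * Real.cos θ / R * t)) :
    lat 0 = lat₀ ∧ lon 0 = lon₀ ∧
      ∀ t ∈ Set.Icc (0 : ℝ) T,
        HasDerivAt lat (v * Real.cos θ / R) t ∧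
        HasDerivAt lon (v * Real.sin θ / (R * Real.cos (lat t))) t :=
  sog_cog_coordinate_update_general v θ R lat₀ lon₀ T hT hθ lat lon hlat hlon hcos
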